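/- Let k, ℓ, n be natural numbers with n ≥ 16 and ℓ ≤ k ≤ n/(4·log₂ n), with k ≥ 4. Let A be a clause or a monomial over the variables of ERPHP (and their twins), and let ρ be a random restriction sampled from the distribution D. Then the pigeon-width of A restricted by ρ is less than ℓ with probability at least 1 − k·(16/15)^ℓ·(2k·log₂ n)^k / n^ℓ. -/

import Mathlib

/-!
Let `M` be the set of pigeons mentioned by `A`. If `ρ` leaves at least `ℓ` of them alive
without killing `A`, then at least `ℓ` points of `M` lie in `S`, and for every `v ∈ M \ S` the
bit `b_v` differs from the sign of some literal of `A` mentioning `v`. A union bound over the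
`ℓ`-subsets of `M` contained in `S` bounds the number of such samples by
`C(|M|, ℓ) · C(n - ℓ, k - ℓ) · 2 ^ (n - |M \ S|) ≤ 2 ^ k · C(n - ℓ, k - ℓ) · 2 ^ n`, so their
probability is at most `2 ^ k (k / n) ^ ℓ`, which is below the claimed bound.
-/

namespace NarrowProofs

/-- The variables of the 3-CNF relativized pigeonhole principle `ERPHP`. -/
inductive ERVar where
  | p (u v : ℕ)
  | q (v w : ℕ)
  | r (v : ℕ)
  | rr (v v' : ℕ)
  | y (u v : ℕ)
  | z (v w : ℕ)
deriving DecidableEq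

/-- The pigeon (if any) mentioned by a variable: the variables `q v w` and
`z v w` mention pigeon `v`; no other variable mentions a pigeon. -/
def ERVar.pigeonOf : ERVar → Option ℕ
  | .q v _ => some v
  | .z v _ => some v
  | _ => none

/-- Validity of a variable of `ERPHP` (1-based index ranges): `p u v` with
`u∈[k]`, `v∈[n]`; `q v w` with `v∈[n]`, `w∈[k-1]`; `r v` with `v∈[n]`;
`rr v v'` with `v≠v'∈[n]`; `y u v` with `u∈[k]`, `v∈[2,n-2]`; `z v w` with
`v∈[n]`, `w∈[k-3]`. -/
def ERVar.valid (n k : ℕ) : ERVar → Prop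
  | .p u v => 1 ≤ u ∧ u ≤ k ∧ 1 ≤ v ∧ v ≤ n
  | .q v w => 1 ≤ v ∧ v ≤ n ∧ 1 ≤ w ∧ w ≤ k - 1
  | .r v => 1 ≤ v ∧ v ≤ n
  | .rr v v' => 1 ≤ v ∧ v ≤ n ∧ 1 ≤ v' ∧ v' ≤ n ∧ v ≠ v'
  | .y u v => 1 ≤ u ∧ u ≤ k ∧ 2 ≤ v ∧ v ≤ n - 2
  | .z v w => 1 ≤ v ∧ v ≤ n ∧ 1 ≤ w ∧ w ≤ k - 3

/-- The sample space of the distribution `D`: a uniformly random `k`-element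
subset `S` of `[n]` together with independent uniformly random Boolean values
`b_v` for the elements of `[n]` (only the values outside `S` are used). -/
abbrev Omega (n k : ℕ) :=
  {S : Finset {x // x ∈ Finset.Icc 1 n} // S.card = k} × ({x // x ∈ Finset.Icc 1 n} → Bool)

/-- Whether `v ∈ S` for the sampled set `S`. -/
def inS {n k : ℕ} (ω : Omega n k) (v : ℕ) : Bool :=
  if h : v ∈ Finset.Icc 1 n then
    decide ((⟨v, h⟩ : {x // x ∈ Finset.Icc 1 n}) ∈ ω.1.1)
  else false

/-- The pigeon `v_u` assigned to `u ∈ [k]`: the `u`-th smallest element of the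
sampled set `S = {v_1 < v_2 < ⋯ < v_k}`. -/
noncomputable def pigeonAt {n k : ℕ} (ω : Omega n k) (u : ℕ) : ℕ :=
  if h : 1 ≤ u ∧ u ≤ k then
    ((ω.1.1.orderIsoOfFin ω.1.2) ⟨u - 1, by omega⟩ : {x // x ∈ Finset.Icc 1 n}).val
  else 0

/-- The random restriction `ρ` determined by the sample `ω` (value `some true`
is ⊤, `some false` is ⊥, `none` means unset):
`r_v = ⊤` iff `v ∈ S`; `r_{v,v'} = r_v ∧ r_{v'}`; `p_{u,v} = ⊤` iff `v = v_u`;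
the `y_{u,v}` are set so as to satisfy the corresponding clauses
(`y_{u,v} = ⊤` iff `v < v_u`); `q_{v,w}` and `z_{v,w}` are left unset for
`v ∈ S` and are set to the random bit `b_v` for `v ∉ S`. -/
noncomputable def rho (n k : ℕ) (ω : Omega n k) : ERVar → Option Bool
  | .p u v => if 1 ≤ u ∧ u ≤ k then some (decide (v = pigeonAt ω u)) else none
  | .q v _ =>
      if inS ω v then none
      else if h : v ∈ Finset.Icc 1 n then some (ω.2 ⟨v, h⟩) else some false
  | .r v => some (inS ω v)
  | .rr v v' => some (inS ω v && inS ω v')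
  | .y u v => if 1 ≤ u ∧ u ≤ k then some (decide (v < pigeonAt ω u)) else none
  | .z v _ =>
      if inS ω v then none
      else if h : v ∈ Finset.Icc 1 n then some (ω.2 ⟨v, h⟩) else some false

/-- `A` (a clause, or — with the sign bit read as the twin-variable flag — a
monomial) is killed by `ρ`: some literal of the clause is satisfied
(respectively, some variable of the monomial is set to the value that makes
the monomial vanish). -/
def killed (ρ : ERVar → Option Bool) (A : Finset (ERVar × Bool)) : Prop :=
  ∃ l ∈ A, ρ l.1 = some l.2

/-- The pigeon-width of `A` restricted by `ρ`: `0` if `A` is killed by `ρ`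
(the restricted clause is trivially true, resp. the restricted monomial
vanishes), and otherwise the number of pigeons mentioned by the variables of
`A` that are left unset by `ρ` (the variables fixed by `ρ` disappear). -/
noncomputable def restrictedPigeonWidth (ρ : ERVar → Option Bool)
    (A : Finset (ERVar × Bool)) : ℕ :=
  letI := Classical.propDecidable
  if killed ρ A then 0
  else Set.ncard {v : ℕ | ∃ l ∈ A, ρ l.1 = none ∧ l.1.pigeonOf = some v}

open Finset

theorem Nat.descFactorial_mul_pow_le_descFactorial_mul_pow {k n : ℕ} (hkn : k ≤ n) (l : ℕ) :
    k.descFactorial l * n ^ l ≤ n.descFactorial l * k ^ l := by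
  induction l with
  | zero => simp
  | succ l ih =>
    have step : (k - l) * n ≤ (n - l) * k := by
      rw [Nat.sub_mul, Nat.sub_mul, Nat.mul_comm k n]
      exact Nat.sub_le_sub_left (Nat.mul_le_mul_left l hkn) _
    calc k.descFactorial (l + 1) * n ^ (l + 1)
        = ((k - l) * n) * (k.descFactorial l * n ^ l) := by
          rw [Nat.descFactorial_succ, pow_succ]; ring
      _ ≤ ((n - l) * k) * (n.descFactorial l * k ^ l) := Nat.mul_le_mul step ih
      _ = n.descFactorial (l + 1) * k ^ (l + 1) := by
          rw [Nat.descFactorial_succ, pow_succ]; ring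

theorem Nat.choose_mul_pow_le_choose_mul_pow {k n : ℕ} (hkn : k ≤ n) (l : ℕ) :
    k.choose l * n ^ l ≤ n.choose l * k ^ l := by
  have h := Nat.descFactorial_mul_pow_le_descFactorial_mul_pow hkn l
  rw [Nat.descFactorial_eq_factorial_mul_choose, Nat.descFactorial_eq_factorial_mul_choose,
    mul_assoc, mul_assoc] at h
  exact Nat.le_of_mul_le_mul_left h l.factorial_pos

/-- `C(n - l, k - l) / C(n, k)` is the probability that a random `k`-subset of an `n`-set
contains a fixed `l`-subset; this says it is at most `(k / n) ^ l`. -/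
theorem Nat.pow_mul_choose_sub_le {l k n : ℕ} (hlk : l ≤ k) (hkn : k ≤ n) :
    n ^ l * (n - l).choose (k - l) ≤ n.choose k * k ^ l := by
  refine Nat.le_of_mul_le_mul_left ?_ (Nat.choose_pos (hlk.trans hkn))
  calc n.choose l * (n ^ l * (n - l).choose (k - l))
      = n.choose k * (k.choose l * n ^ l) := by rw [mul_left_comm, ← Nat.choose_mul hlk]; ring
    _ ≤ n.choose k * (n.choose l * k ^ l) :=
        Nat.mul_le_mul_left _ (Nat.choose_mul_pow_le_choose_mul_pow hkn l)
    _ = n.choose l * (n.choose k * k ^ l) := by ring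

section Counting

variable {α : Type*} [Fintype α] [DecidableEq α]

theorem card_filter_forall_ne_le (T : Finset α) (g : α → Bool) :
    #{b : α → Bool | ∀ x ∈ T, b x ≠ g x} ≤ 2 ^ (Fintype.card α - #T) := by
  calc #{b : α → Bool | ∀ x ∈ T, b x ≠ g x}
      ≤ Fintype.card ((Tᶜ : Finset α) → Bool) := by
        rw [← card_univ]
        refine card_le_card_of_injOn (fun b x => b x) (fun _ _ => mem_univ _) ?_
        intro b hb b' hb' hbb'
        simp only [mem_coe, mem_filter, mem_univ, true_and] at hb hb'
        funext x
        by_cases hx : x ∈ T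
        · rw [Bool.eq_not_iff.2 (hb x hx), Bool.eq_not_iff.2 (hb' x hx)]
        · exact congrFun hbb' ⟨x, mem_compl.2 hx⟩
    _ = 2 ^ (Fintype.card α - #T) := by
        rw [Fintype.card_fun, Fintype.card_coe, Fintype.card_bool, card_compl]

theorem card_filter_le_card_inter_le (M : Finset α) {ℓ k : ℕ} (hℓk : ℓ ≤ k) :
    #{S ∈ (univ : Finset α).powersetCard k | ℓ ≤ #(M ∩ S)} ≤
      (#M).choose ℓ * (Fintype.card α - ℓ).choose (k - ℓ) := by
  have hcover : {S ∈ (univ : Finset α).powersetCard k | ℓ ≤ #(M ∩ S)} ⊆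
      (M.powersetCard ℓ).biUnion fun T => {S ∈ (univ : Finset α).powersetCard k | T ⊆ S} := by
    intro S hS
    obtain ⟨hSk, hℓS⟩ := mem_filter.1 hS
    obtain ⟨T, hTMS, hT⟩ := exists_subset_card_eq hℓS
    exact mem_biUnion.2 ⟨T, mem_powersetCard.2 ⟨hTMS.trans inter_subset_left, hT⟩,
      mem_filter.2 ⟨hSk, hTMS.trans inter_subset_right⟩⟩
  calc _ ≤ _ := card_le_card hcover
    _ ≤ ∑ T ∈ M.powersetCard ℓ, #{S ∈ (univ : Finset α).powersetCard k | T ⊆ S} := card_biUnion_le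
    _ = ∑ T ∈ M.powersetCard ℓ, (Fintype.card α - ℓ).choose (k - ℓ) := by
        refine sum_congr rfl fun T hT => ?_
        rw [(mem_powersetCard.1 hT).2.symm, card_filter_powersetCard_subset _ _ _
          (subset_univ T) ((mem_powersetCard.1 hT).2 ▸ hℓk), card_univ]
    _ = _ := by rw [sum_const, card_powersetCard, smul_eq_mul]

theorem card_filter_le_card_inter_and_forall_ne_le (M : Finset α) (f : α → Bool) {ℓ k : ℕ}
    (hℓk : ℓ ≤ k) :
    #{ω : {S : Finset α // #S = k} × (α → Bool) |
        ℓ ≤ #(M ∩ ω.1.1) ∧ ∀ x ∈ M \ ω.1.1, ω.2 x ≠ f x} ≤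
      2 ^ k * (Fintype.card α - ℓ).choose (k - ℓ) * 2 ^ Fintype.card α := by
  set N := Fintype.card α
  have hfiber : ∀ S ∈ {S ∈ (univ : Finset α).powersetCard k | ℓ ≤ #(M ∩ S)},
      #{ω ∈ {ω : {S : Finset α // #S = k} × (α → Bool) |
          ℓ ≤ #(M ∩ ω.1.1) ∧ ∀ x ∈ M \ ω.1.1, ω.2 x ≠ f x} | ω.1.1 = S} ≤
        2 ^ (N - (#M - k)) := by
    intro S hS
    have hSk : #S = k := (mem_powersetCard.1 (mem_filter.1 hS).1).2
    have hMS : #M - k ≤ #(M \ S) := by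
      have := card_le_card (inter_subset_right (s₁ := M) (s₂ := S))
      have := card_inter_add_card_sdiff M S
      omega
    calc _ ≤ #{b : α → Bool | ∀ x ∈ M \ S, b x ≠ f x} := by
          refine card_le_card_of_injOn Prod.snd ?_ ?_
          · intro ω hω
            simp only [mem_coe, mem_filter, mem_univ, true_and] at hω ⊢
            exact hω.2 ▸ hω.1.2
          · intro ω hω ω' hω' h
            simp only [mem_coe, mem_filter, mem_univ, true_and] at hω hω'
            exact Prod.ext (Subtype.ext (hω.2.trans hω'.2.symm)) h
      _ ≤ 2 ^ (N - #(M \ S)) := card_filter_forall_ne_le _ _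
      _ ≤ 2 ^ (N - (#M - k)) := Nat.pow_le_pow_right two_pos (by omega)
  have hM : #M ≤ N := card_le_univ M
  calc _ ≤ 2 ^ (N - (#M - k)) * #{S ∈ (univ : Finset α).powersetCard k | ℓ ≤ #(M ∩ S)} := by
        refine card_le_mul_card_image_of_maps_to (f := fun ω => ω.1.1) ?_ _ hfiber
        intro ω hω
        simp only [mem_filter, mem_univ, true_and] at hω
        exact mem_filter.2 ⟨mem_powersetCard.2 ⟨subset_univ _, ω.1.2⟩, hω.1⟩
    _ ≤ 2 ^ (N - (#M - k)) * (2 ^ #M * (N - ℓ).choose (k - ℓ)) :=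
        Nat.mul_le_mul_left _ ((card_filter_le_card_inter_le M hℓk).trans
          (Nat.mul_le_mul_right _ (Nat.choose_le_two_pow _ _)))
    _ = 2 ^ (N - (#M - k) + #M) * (N - ℓ).choose (k - ℓ) := by ring
    _ ≤ 2 ^ (k + N) * (N - ℓ).choose (k - ℓ) :=
        Nat.mul_le_mul_right _ (Nat.pow_le_pow_right two_pos (by omega))
    _ = _ := by ring

end Counting

section Restriction

variable {n k : ℕ}

theorem inS_coe (ω : Omega n k) (x : {x // x ∈ Icc 1 n}) : inS ω x = decide (x ∈ ω.1.1) :=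
  dif_pos x.2

theorem rho_of_pigeonOf_eq_some {e : ERVar} {v : ℕ} (he : e.pigeonOf = some v)
    (ω : Omega n k) :
    rho n k ω e = if inS ω v then none
      else if h : v ∈ Icc 1 n then some (ω.2 ⟨v, h⟩) else some false := by
  cases e <;> simp_all [ERVar.pigeonOf, rho]

theorem exists_mem_of_rho_eq_none {e : ERVar} {v : ℕ} (he : e.pigeonOf = some v)
    {ω : Omega n k} (h : rho n k ω e = none) : ∃ hv : v ∈ Icc 1 n, ⟨v, hv⟩ ∈ ω.1.1 := by
  rw [rho_of_pigeonOf_eq_some he] at h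
  by_cases hv : v ∈ Icc 1 n
  · refine ⟨hv, by_contra fun hS => ?_⟩
    have hinS : inS ω v = false := by simpa using inS_coe ω ⟨v, hv⟩ |>.trans (decide_eq_false hS)
    rw [hinS, if_neg Bool.false_ne_true, dif_pos hv] at h
    cases h
  · simp [inS, hv] at h

theorem rho_eq_some_of_notMem {e : ERVar} {ω : Omega n k} {x : {x // x ∈ Icc 1 n}}
    (he : e.pigeonOf = some x.1) (hx : x ∉ ω.1.1) : rho n k ω e = some (ω.2 x) := by
  simp [rho_of_pigeonOf_eq_some he, inS_coe ω x, hx]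

def mentionedPigeons (n : ℕ) (A : Finset (ERVar × Bool)) : Finset {x // x ∈ Icc 1 n} :=
  open Classical in {x | ∃ l ∈ A, l.1.pigeonOf = some x.1}

theorem mem_mentionedPigeons {A : Finset (ERVar × Bool)} {x : {x // x ∈ Icc 1 n}} :
    x ∈ mentionedPigeons n A ↔ ∃ l ∈ A, l.1.pigeonOf = some x.1 := by
  simp only [mentionedPigeons, mem_filter, mem_univ, true_and]

/-- The sign of a literal of `A` mentioning pigeon `v`: if `b_v` equals it, `ρ` kills `A`. -/
noncomputable def killingBit (A : Finset (ERVar × Bool)) (v : ℕ) : Bool :=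
  open Classical in if h : ∃ l ∈ A, l.1.pigeonOf = some v then h.choose.2 else false

theorem not_killed_and_le_card_inter_of_le_restrictedPigeonWidth {A : Finset (ERVar × Bool)}
    {ω : Omega n k} {ℓ : ℕ} (hℓ : 0 < ℓ) (h : ℓ ≤ restrictedPigeonWidth (rho n k ω) A) :
    ¬ killed (rho n k ω) A ∧ ℓ ≤ #(mentionedPigeons n A ∩ ω.1.1) := by
  classical
  unfold restrictedPigeonWidth at h
  split_ifs at h with hkill
  · omega
  refine ⟨hkill, h.trans ?_⟩
  have hsub : {v : ℕ | ∃ l ∈ A, rho n k ω l.1 = none ∧ l.1.pigeonOf = some v} ⊆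
      ((mentionedPigeons n A ∩ ω.1.1).map (Function.Embedding.subtype _) : Set ℕ) := by
    rintro v ⟨l, hlA, hnone, hpig⟩
    obtain ⟨hv, hvS⟩ := exists_mem_of_rho_eq_none hpig hnone
    simp only [coe_map, Function.Embedding.coe_subtype, Set.mem_image, mem_coe, mem_inter]
    exact ⟨⟨v, hv⟩, ⟨mem_mentionedPigeons.2 ⟨l, hlA, hpig⟩, hvS⟩, rfl⟩
  exact (Set.ncard_le_ncard hsub (finite_toSet _)).trans_eq
    (by rw [Set.ncard_coe_finset, card_map])

theorem ne_killingBit_of_not_killed {A : Finset (ERVar × Bool)} {ω : Omega n k}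
    (hkill : ¬ killed (rho n k ω) A) {x : {x // x ∈ Icc 1 n}}
    (hx : x ∈ mentionedPigeons n A \ ω.1.1) : ω.2 x ≠ killingBit A x := by
  classical
  obtain ⟨hxM, hxS⟩ := mem_sdiff.1 hx
  have hex := mem_mentionedPigeons.1 hxM
  obtain ⟨hlA, hpig⟩ := hex.choose_spec
  rw [killingBit, dif_pos hex]
  intro hb
  exact hkill ⟨hex.choose, hlA, by rw [rho_eq_some_of_notMem hpig hxS, hb]⟩

end Restriction

theorem card_Omega (n k : ℕ) : Fintype.card (Omega n k) = n.choose k * 2 ^ n := by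
  simp [Omega, Fintype.card_finset_len]

theorem card_le_restrictedPigeonWidth_mul_pow_le {n k ℓ : ℕ} (hℓk : ℓ ≤ k) (hkn : k ≤ n)
    (A : Finset (ERVar × Bool)) :
    #{ω : Omega n k | ℓ ≤ restrictedPigeonWidth (rho n k ω) A} * n ^ ℓ ≤
      2 ^ k * k ^ ℓ * (n.choose k * 2 ^ n) := by
  rcases Nat.eq_zero_or_pos ℓ with rfl | hℓ
  · rw [pow_zero, pow_zero, mul_one, mul_one, ← card_Omega]
    exact (card_le_univ _).trans (Nat.le_mul_of_pos_left _ (by positivity))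
  have hcount := card_filter_le_card_inter_and_forall_ne_le (mentionedPigeons n A)
    (fun x => killingBit A x) hℓk
  simp only [Fintype.card_coe, Nat.card_Icc, add_tsub_cancel_right] at hcount
  have hwide := monotone_filter_right univ fun (ω : Omega n k) _ hω =>
    let ⟨hkill, hcard⟩ := not_killed_and_le_card_inter_of_le_restrictedPigeonWidth hℓ hω
    (⟨hcard, fun _ hx => ne_killingBit_of_not_killed hkill hx⟩ :
      ℓ ≤ #(mentionedPigeons n A ∩ ω.1.1) ∧
        ∀ x ∈ mentionedPigeons n A \ ω.1.1, ω.2 x ≠ killingBit A x)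
  calc _ ≤ 2 ^ k * (n - ℓ).choose (k - ℓ) * 2 ^ n * n ^ ℓ :=
        Nat.mul_le_mul_right _ ((card_le_card hwide).trans hcount)
    _ = 2 ^ k * 2 ^ n * (n ^ ℓ * (n - ℓ).choose (k - ℓ)) := by ring
    _ ≤ 2 ^ k * 2 ^ n * (n.choose k * k ^ ℓ) :=
        Nat.mul_le_mul_left _ (Nat.pow_mul_choose_sub_le hℓk hkn)
    _ = _ := by ring

theorem one_sub_le_ncard_div_card {Ω : Type*} [Fintype Ω] (P : Ω → Prop) [DecidablePred P]
    {ε : ℝ} (hΩ : 0 < Fintype.card Ω) (h : (#{ω | ¬ P ω} : ℝ) ≤ ε * Fintype.card Ω) :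
    1 - ε ≤ {ω | P ω}.ncard / Fintype.card Ω := by
  have hsplit := card_filter_add_card_filter_not (s := univ) P
  rw [card_univ] at hsplit
  rw [Set.ncard_eq_toFinset_card', Set.toFinset_ofPred, le_div_iff₀ (by exact_mod_cast hΩ)]
  have : (#{ω | P ω} : ℝ) + #{ω | ¬ P ω} = Fintype.card Ω := by exact_mod_cast hsplit
  linarith

theorem two_pow_mul_pow_le {k ℓ : ℕ} {L : ℝ} (hk : 1 ≤ k) (hL : 1 ≤ L) (hℓk : ℓ ≤ k) :
    (2 : ℝ) ^ k * (k : ℝ) ^ ℓ ≤ k * (16 / 15 : ℝ) ^ ℓ * (2 * k * L) ^ k := by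
  have hk' : (1 : ℝ) ≤ k := by exact_mod_cast hk
  calc (2 : ℝ) ^ k * (k : ℝ) ^ ℓ ≤ 2 ^ k * (k : ℝ) ^ k := by gcongr
    _ = (2 * k * 1) ^ k := by ring
    _ ≤ (2 * k * L) ^ k := by gcongr
    _ ≤ k * (16 / 15 : ℝ) ^ ℓ * (2 * k * L) ^ k :=
        le_mul_of_one_le_left (by positivity) (one_le_mul_of_one_le_of_one_le hk'
          (one_le_pow₀ (by norm_num)))

theorem restriction_pigeon_width_general
    (n k ℓ : ℕ) (hn : 16 ≤ n) (hk : 4 ≤ k) (hlk : ℓ ≤ k)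
    (hkn : (k : ℝ) ≤ (n : ℝ) / (4 * Real.logb 2 (n : ℝ)))
    (A : Finset (ERVar × Bool)) :
    1 - (k : ℝ) * (16 / 15 : ℝ) ^ ℓ * (2 * (k : ℝ) * Real.logb 2 (n : ℝ)) ^ k / (n : ℝ) ^ ℓ ≤
      (Set.ncard {ω : Omega n k | restrictedPigeonWidth (rho n k ω) A < ℓ} : ℝ) /
        (Fintype.card (Omega n k) : ℝ) := by
  classical
  have hn0 : (0 : ℝ) < n := by positivity
  have hL : 1 ≤ Real.logb 2 n := by
    rw [Real.le_logb_iff_rpow_le one_lt_two hn0, Real.rpow_one]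
    exact_mod_cast (by omega : 2 ≤ n)
  have hkn' : k ≤ n := by exact_mod_cast hkn.trans (div_le_self hn0.le (by linarith))
  have hwide : (#{ω : Omega n k | ℓ ≤ restrictedPigeonWidth (rho n k ω) A} : ℝ) * n ^ ℓ ≤
      2 ^ k * k ^ ℓ * (n.choose k * 2 ^ n) := by
    exact_mod_cast card_le_restrictedPigeonWidth_mul_pow_le hlk hkn' A
  have hΩ : 0 < Fintype.card (Omega n k) := by
    rw [card_Omega]; exact Nat.mul_pos (Nat.choose_pos hkn') (by positivity)
  refine one_sub_le_ncard_div_card _ hΩ ?_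
  simp only [not_lt, card_Omega, Nat.cast_mul, Nat.cast_pow, Nat.cast_ofNat]
  rw [div_mul_eq_mul_div, le_div_iff₀ (by positivity)]
  exact hwide.trans
    (mul_le_mul_of_nonneg_right (two_pow_mul_pow_le (by omega) hL hlk) (by positivity))

/-- for `n ≥ 16`, `4 ≤ k`, `ℓ ≤ k ≤ n/(4·log₂ n)` and any clause
or monomial `A` over the variables of `ERPHP` (and their twins), the
pigeon-width of `A` restricted by a random restriction `ρ` sampled from `D`
is less than `ℓ` with probability at least
`1 − k·(16/15)^ℓ·(2k·log₂ n)^k / n^ℓ`. -/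
theorem restriction_pigeon_width
    (n k ℓ : ℕ) (hn : 16 ≤ n) (hk : 4 ≤ k) (hlk : ℓ ≤ k)
    (hkn : (k : ℝ) ≤ (n : ℝ) / (4 * Real.logb 2 (n : ℝ)))
    (A : Finset (ERVar × Bool)) (hA : ∀ l ∈ A, ERVar.valid n k l.1) :
    1 - (k : ℝ) * (16 / 15 : ℝ) ^ ℓ * (2 * (k : ℝ) * Real.logb 2 (n : ℝ)) ^ k / (n : ℝ) ^ ℓ ≤
      (Set.ncard {ω : Omega n k | restrictedPigeonWidth (rho n k ω) A < ℓ} : ℝ) /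
        (Fintype.card (Omega n k) : ℝ) :=
  restriction_pigeon_width_general n k ℓ hn hk hlk hkn A

end NarrowProofs
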